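/- Let G be a finite simple connected graph and let v be a real eigenvector of the normalized modularity matrix 𝓜 corresponding to a positive eigenvalue μ, i.e., 𝓜v = μv with v ≠ 0 and μ > 0. Let S = { i : v_i ≥ 0 } and let cos θ = (Σ_{i∈V} √d_i |v_i|)/(‖v‖₂‖δ‖₂) be the cosine of the acute angle between |v| = (|v₁|,…,|vₙ|)ᵀ and δ = (√d₁,…,√dₙ)ᵀ. If μ + 1 > 4·(vol S · vol S̄/(vol V)²)·(1/cos²θ), then Q(S) > 0. -/

import Mathlib

open Matrix Finset

/-!
Write `δ = D^{1/2} 𝟙`, `N = D^{-1/2} A D^{-1/2}` (so `𝓜 = N - δδᵀ / vol V`) and let `u = D^{1/2} s`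
for the sign vector `s` of `S`. Then `uᵀ 𝓜 u = sᵀ A s - (δ ⬝ u)² / vol V = 4 Q(S)`.

Since `𝓜 δ = 0` and `μ ≠ 0`, the eigenvector `v` is orthogonal to `δ`, hence also an eigenvector of
`N` for `μ`, and `uᵀ 𝓜 u = wᵀ N w` for the projection `w` of `u` orthogonal to `δ`. The spectrum of
`N` lies above `-1` (`D + A` is positive semidefinite), so splitting `w` along `v` gives
`wᵀ N w ≥ (μ + 1) (w ⬝ v)² / ‖v‖² - ‖w‖²`. Here `w ⬝ v = u ⬝ v = Σ √dᵢ |vᵢ|` and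
`‖w‖² = vol V - (vol S - vol S̄)² / vol V = 4 vol S vol S̄ / vol V`, so
`4 Q(S) ≥ vol V ((μ + 1) cos² θ - 4 vol S vol S̄ / (vol V)²)`, which is positive by hypothesis.
-/

namespace Matrix

variable {ι : Type*} [Fintype ι] {A : Matrix ι ι ℝ}

theorem dotProduct_mulVec_comm_of_isSymm {M : Matrix ι ι ℝ} (hM : M.IsSymm) (x y : ι → ℝ) :
    x ⬝ᵥ M *ᵥ y = y ⬝ᵥ M *ᵥ x := by
  rw [dotProduct_mulVec, ← mulVec_transpose, hM.eq, dotProduct_comm]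

theorem dotProduct_self_pos_of_ne_zero {v : ι → ℝ} (hv : v ≠ 0) : 0 < v ⬝ᵥ v :=
  (Finset.sum_nonneg fun i _ => mul_self_nonneg (v i)).lt_of_ne
    fun h => hv (dotProduct_self_eq_zero.mp h.symm)

theorem le_dotProduct_mulVec_of_mulVec_eq_smul {M : Matrix ι ι ℝ} (hM : M.IsSymm)
    (hM1 : ∀ x, -(x ⬝ᵥ x) ≤ x ⬝ᵥ M *ᵥ x) {μ : ℝ} {v : ι → ℝ} (hv : M *ᵥ v = μ • v)
    (w : ι → ℝ) : (μ + 1) * (w ⬝ᵥ v) ^ 2 / (v ⬝ᵥ v) - w ⬝ᵥ w ≤ w ⬝ᵥ M *ᵥ w := by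
  rcases eq_or_ne v 0 with rfl | hv0
  · simpa using hM1 w
  have hvv := (dotProduct_self_pos_of_ne_zero hv0).ne'
  -- Write `w = r + c • v` with `r ⊥ v`; as `v` is an eigenvector, the cross terms vanish.
  set c := (w ⬝ᵥ v) / (v ⬝ᵥ v)
  set r := w - c • v
  have hrv : r ⬝ᵥ v = 0 := by
    simp only [r, sub_dotProduct, smul_dotProduct, smul_eq_mul, c]
    field_simp
    ring
  have hw : w = r + c • v := by simp [r]
  have hquad : w ⬝ᵥ M *ᵥ w = r ⬝ᵥ M *ᵥ r + c ^ 2 * μ * (v ⬝ᵥ v) := by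
    rw [hw, mulVec_add, dotProduct_add, add_dotProduct, add_dotProduct,
      dotProduct_mulVec_comm_of_isSymm hM (c • v) r]
    simp only [mulVec_smul, hv, dotProduct_smul, smul_dotProduct, smul_eq_mul, hrv]
    ring
  have hnorm : w ⬝ᵥ w = r ⬝ᵥ r + c ^ 2 * (v ⬝ᵥ v) := by
    rw [hw]
    simp only [dotProduct_add, add_dotProduct, dotProduct_smul, smul_dotProduct, smul_eq_mul, hrv,
      dotProduct_comm v r]
    ring
  have hc : (w ⬝ᵥ v) ^ 2 / (v ⬝ᵥ v) = c ^ 2 * (v ⬝ᵥ v) := by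
    simp only [c]
    field_simp
  rw [hquad, hnorm, mul_div_assoc, hc]
  linarith [hM1 r]

theorem sum_mul_sq_add_dotProduct_mulVec_nonneg (hA : A.IsSymm) (hA0 : ∀ i j, 0 ≤ A i j)
    (y : ι → ℝ) : 0 ≤ ∑ i, (∑ j, A i j) * y i ^ 2 + y ⬝ᵥ A *ᵥ y := by
  have hcol : ∑ i, ∑ j, A i j * y j ^ 2 = ∑ i, (∑ j, A i j) * y i ^ 2 := by
    rw [Finset.sum_comm]
    refine Finset.sum_congr rfl fun j _ => ?_
    rw [Finset.sum_mul]
    exact Finset.sum_congr rfl fun i _ => by rw [hA.apply j i]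
  have hsq : ∑ i, ∑ j, A i j * (y i + y j) ^ 2
      = 2 * (∑ i, (∑ j, A i j) * y i ^ 2 + y ⬝ᵥ A *ᵥ y) := by
    have hpt : ∀ i j, A i j * (y i + y j) ^ 2
        = A i j * y i ^ 2 + A i j * y j ^ 2 + 2 * (y i * (A i j * y j)) := fun i j => by ring
    simp only [hpt, Finset.sum_add_distrib, hcol, ← Finset.mul_sum, ← Finset.sum_mul, dotProduct,
      mulVec]
    ring
  have : 0 ≤ ∑ i, ∑ j, A i j * (y i + y j) ^ 2 :=
    Finset.sum_nonneg fun i _ => Finset.sum_nonneg fun j _ => mul_nonneg (hA0 i j) (sq_nonneg _)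
  linarith

noncomputable def sqrtDegree (A : Matrix ι ι ℝ) (i : ι) : ℝ := √(∑ j, A i j)

noncomputable def modularity (A : Matrix ι ι ℝ) (S : Finset ι) : ℝ :=
  (∑ i ∈ S, ∑ j ∈ S, A i j) - (∑ i ∈ S, ∑ j, A i j) ^ 2 / ∑ i, ∑ j, A i j

theorem sqrtDegree_pos {i : ι} (h : 0 < ∑ j, A i j) : 0 < sqrtDegree A i :=
  Real.sqrt_pos.mpr h

theorem sqrtDegree_mul_self {i : ι} (h : 0 ≤ ∑ j, A i j) :
    sqrtDegree A i * sqrtDegree A i = ∑ j, A i j :=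
  Real.mul_self_sqrt h

theorem sqrtDegree_dotProduct_self (hd : ∀ i, 0 ≤ ∑ j, A i j) :
    sqrtDegree A ⬝ᵥ sqrtDegree A = ∑ i, ∑ j, A i j :=
  Finset.sum_congr rfl fun i _ => sqrtDegree_mul_self (hd i)

theorem sum_sqrtDegree_mul_abs_pos (hdeg : ∀ i, 0 < ∑ j, A i j) {v : ι → ℝ} (hv : v ≠ 0) :
    0 < ∑ i, sqrtDegree A i * |v i| := by
  obtain ⟨i, hi⟩ := Function.ne_iff.mp hv
  exact Finset.sum_pos' (fun j _ => mul_nonneg (sqrtDegree_pos (hdeg j)).le (abs_nonneg _))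
    ⟨i, Finset.mem_univ _, mul_pos (sqrtDegree_pos (hdeg i)) (abs_pos.mpr hi)⟩

theorem sum_degree_pos [Nonempty ι] (hdeg : ∀ i, 0 < ∑ j, A i j) : 0 < ∑ i, ∑ j, A i j :=
  Finset.sum_pos (fun i _ => hdeg i) Finset.univ_nonempty

section Normalized

variable [DecidableEq ι]

noncomputable def normalizedAdj (A : Matrix ι ι ℝ) : Matrix ι ι ℝ :=
  diagonal (fun i => (sqrtDegree A i)⁻¹) * A * diagonal (fun i => (sqrtDegree A i)⁻¹)

noncomputable def normalizedModularity (A : Matrix ι ι ℝ) : Matrix ι ι ℝ :=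
  normalizedAdj A - (1 / ∑ i, ∑ j, A i j) • vecMulVec (sqrtDegree A) (sqrtDegree A)

theorem normalizedAdj_mulVec (x : ι → ℝ) :
    normalizedAdj A *ᵥ x
      = fun i => (sqrtDegree A i)⁻¹ * (A *ᵥ fun j => (sqrtDegree A j)⁻¹ * x j) i := by
  have hD : (diagonal fun i => (sqrtDegree A i)⁻¹) *ᵥ x = fun j => (sqrtDegree A j)⁻¹ * x j :=
    funext (mulVec_diagonal _ _)
  ext i
  rw [normalizedAdj, ← mulVec_mulVec, ← mulVec_mulVec, hD, mulVec_diagonal]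

theorem dotProduct_normalizedAdj_mulVec (x : ι → ℝ) :
    x ⬝ᵥ normalizedAdj A *ᵥ x
      = (fun i => (sqrtDegree A i)⁻¹ * x i) ⬝ᵥ A *ᵥ (fun i => (sqrtDegree A i)⁻¹ * x i) := by
  simp only [normalizedAdj_mulVec, dotProduct]
  exact Finset.sum_congr rfl fun i _ => by ring

theorem normalizedAdj_mulVec_sqrtDegree (hdeg : ∀ i, 0 < ∑ j, A i j) :
    normalizedAdj A *ᵥ sqrtDegree A = sqrtDegree A := by
  have hne : ∀ i, sqrtDegree A i ≠ 0 := fun i => (sqrtDegree_pos (hdeg i)).ne'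
  rw [normalizedAdj_mulVec]
  ext i
  simp only [inv_mul_cancel₀ (hne _), mulVec, dotProduct, mul_one]
  rw [← sqrtDegree_mul_self (hdeg i).le, inv_mul_cancel_left₀ (hne i)]

theorem normalizedAdj_isSymm (hA : A.IsSymm) : (normalizedAdj A).IsSymm := by
  simp [normalizedAdj, IsSymm, transpose_mul, hA.eq, Matrix.mul_assoc]

theorem neg_dotProduct_self_le_dotProduct_normalizedAdj_mulVec (hA : A.IsSymm)
    (hA0 : ∀ i j, 0 ≤ A i j) (hdeg : ∀ i, 0 < ∑ j, A i j) (x : ι → ℝ) :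
    -(x ⬝ᵥ x) ≤ x ⬝ᵥ normalizedAdj A *ᵥ x := by
  have h := sum_mul_sq_add_dotProduct_mulVec_nonneg hA hA0 fun i => (sqrtDegree A i)⁻¹ * x i
  have hnorm : ∑ i, (∑ j, A i j) * ((sqrtDegree A i)⁻¹ * x i) ^ 2 = x ⬝ᵥ x := by
    refine Finset.sum_congr rfl fun i _ => ?_
    rw [mul_pow, inv_pow, sqrtDegree, Real.sq_sqrt (hdeg i).le]
    field_simp [(hdeg i).ne']
  rw [dotProduct_normalizedAdj_mulVec]
  linarith

theorem normalizedModularity_zero : normalizedModularity (0 : Matrix ι ι ℝ) = 0 := by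
  simp [normalizedModularity, normalizedAdj, sqrtDegree]

theorem normalizedModularity_mulVec (x : ι → ℝ) :
    normalizedModularity A *ᵥ x
      = normalizedAdj A *ᵥ x - ((sqrtDegree A ⬝ᵥ x) / ∑ i, ∑ j, A i j) • sqrtDegree A := by
  rw [normalizedModularity, sub_mulVec, smul_mulVec, vecMulVec_mulVec]
  ext i
  simp only [Pi.sub_apply, Pi.smul_apply, smul_eq_mul, op_smul_eq_smul]
  ring

theorem sign_dotProduct_mulVec_sign (hA : A.IsSymm) (S : Finset ι) :
    (fun i => if i ∈ S then (1 : ℝ) else -1) ⬝ᵥ A *ᵥ (fun i => if i ∈ S then (1 : ℝ) else -1)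
      = 4 * ∑ i ∈ S, ∑ j ∈ S, A i j - 4 * ∑ i ∈ S, ∑ j, A i j + ∑ i, ∑ j, A i j := by
  have hpt : ∀ i j, (if i ∈ S then (1 : ℝ) else -1) * (A i j * if j ∈ S then 1 else -1)
      = 4 * (if i ∈ S then (if j ∈ S then A i j else 0) else 0)
        - 2 * (if i ∈ S then A i j else 0) - 2 * (if j ∈ S then A j i else 0) + A i j := by
    intro i j
    rw [hA.apply j i]
    split_ifs <;> ring
  have hcol : ∑ i, ∑ j, (if j ∈ S then A j i else 0) = ∑ i ∈ S, ∑ j, A i j := by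
    rw [Finset.sum_comm]
    simp only [Finset.sum_ite_irrel, Finset.sum_const_zero, Finset.sum_ite_mem_eq]
  simp only [dotProduct, mulVec, Finset.mul_sum, hpt]
  simp only [Finset.sum_add_distrib, Finset.sum_sub_distrib, ← Finset.mul_sum, hcol]
  simp only [Finset.sum_ite_irrel, Finset.sum_const_zero, Finset.sum_ite_mem_eq]
  ring

noncomputable def signedSqrtDegree (A : Matrix ι ι ℝ) (S : Finset ι) (i : ι) : ℝ :=
  if i ∈ S then sqrtDegree A i else -sqrtDegree A i

theorem signedSqrtDegree_dotProduct_self (hd : ∀ i, 0 ≤ ∑ j, A i j) (S : Finset ι) :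
    signedSqrtDegree A S ⬝ᵥ signedSqrtDegree A S = ∑ i, ∑ j, A i j := by
  refine Finset.sum_congr rfl fun i _ => ?_
  rw [signedSqrtDegree]
  split_ifs
  · exact sqrtDegree_mul_self (hd i)
  · rw [neg_mul_neg, sqrtDegree_mul_self (hd i)]

theorem sqrtDegree_dotProduct_signedSqrtDegree (hd : ∀ i, 0 ≤ ∑ j, A i j) (S : Finset ι) :
    sqrtDegree A ⬝ᵥ signedSqrtDegree A S = ∑ i ∈ S, ∑ j, A i j - ∑ i ∈ Sᶜ, ∑ j, A i j := by
  rw [dotProduct, ← Finset.sum_add_sum_compl S, sub_eq_add_neg, ← Finset.sum_neg_distrib]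
  congr 1 <;> refine Finset.sum_congr rfl fun i hi => ?_
  · rw [signedSqrtDegree, if_pos hi, sqrtDegree_mul_self (hd i)]
  · rw [signedSqrtDegree, if_neg (Finset.mem_compl.mp hi), mul_neg, sqrtDegree_mul_self (hd i)]

theorem signedSqrtDegree_dotProduct_of_nonneg (v : ι → ℝ) :
    signedSqrtDegree A (Finset.univ.filter fun i => 0 ≤ v i) ⬝ᵥ v
      = ∑ i, sqrtDegree A i * |v i| := by
  refine Finset.sum_congr rfl fun i _ => ?_
  by_cases h : 0 ≤ v i
  · simp [signedSqrtDegree, h, abs_of_nonneg h]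
  · simp [signedSqrtDegree, h, abs_of_neg (not_le.mp h)]

theorem signedSqrtDegree_dotProduct_normalizedModularity_mulVec [Nonempty ι] (hA : A.IsSymm)
    (hdeg : ∀ i, 0 < ∑ j, A i j) (S : Finset ι) :
    signedSqrtDegree A S ⬝ᵥ normalizedModularity A *ᵥ signedSqrtDegree A S
      = 4 * modularity A S := by
  have hsign : (fun i => (sqrtDegree A i)⁻¹ * signedSqrtDegree A S i)
      = fun i => if i ∈ S then (1 : ℝ) else -1 := by
    ext i
    have := (sqrtDegree_pos (hdeg i)).ne'
    rw [signedSqrtDegree]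
    split_ifs <;> field_simp
  have hvol := (sum_degree_pos hdeg).ne'
  have hcompl : ∑ i ∈ Sᶜ, ∑ j, A i j = ∑ i, ∑ j, A i j - ∑ i ∈ S, ∑ j, A i j := by
    rw [← Finset.sum_add_sum_compl S]
    ring
  rw [normalizedModularity_mulVec, dotProduct_sub, dotProduct_normalizedAdj_mulVec, hsign,
    sign_dotProduct_mulVec_sign hA, dotProduct_smul, smul_eq_mul, dotProduct_comm _ (sqrtDegree A),
    sqrtDegree_dotProduct_signedSqrtDegree (fun i => (hdeg i).le), hcompl, modularity]
  field_simp
  ring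

section Eigenvector

variable [Nonempty ι] (hA : A.IsSymm) (hdeg : ∀ i, 0 < ∑ j, A i j) {μ : ℝ} (hμ : μ ≠ 0)
  {v : ι → ℝ} (hv : normalizedModularity A *ᵥ v = μ • v)
include hA hdeg hμ hv

theorem sqrtDegree_dotProduct_eq_zero_of_mulVec_eq_smul : sqrtDegree A ⬝ᵥ v = 0 := by
  have h := congrArg (sqrtDegree A ⬝ᵥ ·) hv
  simp only [normalizedModularity_mulVec, dotProduct_sub, dotProduct_smul, smul_eq_mul,
    sqrtDegree_dotProduct_self fun i => (hdeg i).le] at h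
  rw [dotProduct_mulVec_comm_of_isSymm (normalizedAdj_isSymm hA),
    normalizedAdj_mulVec_sqrtDegree hdeg, div_mul_cancel₀ _ (sum_degree_pos hdeg).ne',
    dotProduct_comm v, sub_self] at h
  exact (mul_eq_zero.mp h.symm).resolve_left hμ

theorem normalizedAdj_mulVec_eq_smul_of_mulVec_eq_smul : normalizedAdj A *ᵥ v = μ • v := by
  rw [← hv, normalizedModularity_mulVec,
    sqrtDegree_dotProduct_eq_zero_of_mulVec_eq_smul hA hdeg hμ hv, zero_div, zero_smul, sub_zero]

theorem le_dotProduct_normalizedModularity_mulVec (hA0 : ∀ i j, 0 ≤ A i j) (u : ι → ℝ) :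
    (μ + 1) * (u ⬝ᵥ v) ^ 2 / (v ⬝ᵥ v) - u ⬝ᵥ u + (sqrtDegree A ⬝ᵥ u) ^ 2 / ∑ i, ∑ j, A i j
      ≤ u ⬝ᵥ normalizedModularity A *ᵥ u := by
  rw [normalizedModularity_mulVec]
  set δ := sqrtDegree A
  set vol := ∑ i, ∑ j, A i j
  have hvol : vol ≠ 0 := (sum_degree_pos hdeg).ne'
  have hδδ : δ ⬝ᵥ δ = vol := sqrtDegree_dotProduct_self fun i => (hdeg i).le
  have hδv : δ ⬝ᵥ v = 0 := sqrtDegree_dotProduct_eq_zero_of_mulVec_eq_smul hA hdeg hμ hv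
  have hNδ : normalizedAdj A *ᵥ δ = δ := normalizedAdj_mulVec_sqrtDegree hdeg
  have hδNu : δ ⬝ᵥ normalizedAdj A *ᵥ u = δ ⬝ᵥ u := by
    rw [dotProduct_mulVec_comm_of_isSymm (normalizedAdj_isSymm hA), hNδ, dotProduct_comm]
  -- On the orthogonal complement of `δ`, the modularity matrix agrees with `normalizedAdj A`.
  set c := δ ⬝ᵥ u / vol
  set w := u - c • δ
  have key := le_dotProduct_mulVec_of_mulVec_eq_smul (normalizedAdj_isSymm hA)
    (neg_dotProduct_self_le_dotProduct_normalizedAdj_mulVec hA hA0 hdeg)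
    (normalizedAdj_mulVec_eq_smul_of_mulVec_eq_smul hA hdeg hμ hv) w
  have hwv : w ⬝ᵥ v = u ⬝ᵥ v := by
    rw [sub_dotProduct, smul_dotProduct, hδv, smul_zero, sub_zero]
  have hww : w ⬝ᵥ w = u ⬝ᵥ u - (δ ⬝ᵥ u) ^ 2 / vol := by
    simp only [w, sub_dotProduct, dotProduct_sub, smul_dotProduct, dotProduct_smul, smul_eq_mul,
      hδδ, dotProduct_comm u δ, c]
    field_simp
    ring
  have hwNw : w ⬝ᵥ normalizedAdj A *ᵥ w = u ⬝ᵥ (normalizedAdj A *ᵥ u - c • δ) := by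
    simp only [w, mulVec_sub, mulVec_smul, sub_dotProduct, dotProduct_sub, smul_dotProduct,
      dotProduct_smul, smul_eq_mul, hNδ, hδNu, hδδ, dotProduct_comm u δ, c]
    field_simp
    ring
  rw [hwv, hww, hwNw] at key
  linarith

end Eigenvector

end Normalized

end Matrix

namespace SimpleGraph

variable {V : Type*} {G : SimpleGraph V} [DecidableRel G.Adj]

theorem adjMatrix_nonneg (i j : V) : 0 ≤ G.adjMatrix ℝ i j := by
  rw [adjMatrix_apply]
  split_ifs <;> norm_num

variable [Fintype V]

theorem Connected.sum_adjMatrix_pos [Nontrivial V] (hG : G.Connected) (i : V) :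
    0 < ∑ j, G.adjMatrix ℝ i j := by
  simpa only [adjMatrix_apply, ← degree_eq_sum_if_adj, Nat.cast_pos]
    using hG.preconnected.degree_pos_of_nontrivial i

theorem nontrivial_of_normalizedModularity_mulVec_eq_smul [DecidableEq V] {μ : ℝ} (hμ : μ ≠ 0)
    {v : V → ℝ} (hv : v ≠ 0) (h : normalizedModularity (G.adjMatrix ℝ) *ᵥ v = μ • v) :
    Nontrivial V := by
  by_contra hV
  have hA : G.adjMatrix ℝ = 0 := by
    ext i j
    simp [(not_nontrivial_iff_subsingleton.mp hV).elim i j]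
  rw [hA, normalizedModularity_zero, zero_mulVec, eq_comm, smul_eq_zero] at h
  exact hv (h.resolve_left hμ)

end SimpleGraph

theorem pos_of_cosine_condition {μ P N a b q : ℝ} (hP : 0 < P) (hN : 0 < N) (hab : 0 < a + b)
    (hq : (μ + 1) * P ^ 2 / N - (a + b) + (a - b) ^ 2 / (a + b) ≤ 4 * q)
    (hμ : 4 * (a * b / (a + b) ^ 2) * (1 / (P / (√N * √(a + b))) ^ 2) < μ + 1) : 0 < q := by
  have hcos : 4 * (a * b / (a + b) ^ 2) * (1 / (P / (√N * √(a + b))) ^ 2)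
      = 4 * (a * b) / (a + b) / (P ^ 2 / N) := by
    rw [div_pow, mul_pow, Real.sq_sqrt hN.le, Real.sq_sqrt hab.le]
    field_simp
  have hcut : (a - b) ^ 2 / (a + b) - (a + b) = -(4 * (a * b) / (a + b)) := by
    field_simp
    ring
  rw [hcos, div_lt_iff₀ (by positivity), ← mul_div_assoc] at hμ
  linarith

theorem nodal_domain_positive_modularity_cosine_condition_general
    {n : ℕ} (G : SimpleGraph (Fin n)) [DecidableRel G.Adj]
    (hconn : G.Connected)
    (A : Matrix (Fin n) (Fin n) ℝ) (hA : A = G.adjMatrix ℝ)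
    (d : Fin n → ℝ) (hd : d = fun i => ∑ j, A i j)
    (vol : ℝ) (hvol : vol = ∑ i, d i)
    (δ : Fin n → ℝ) (hδ : δ = fun i => Real.sqrt (d i))
    (NM : Matrix (Fin n) (Fin n) ℝ)
    (hNM : NM = diagonal (fun i => (Real.sqrt (d i))⁻¹) * A *
                diagonal (fun i => (Real.sqrt (d i))⁻¹) - (1 / vol) • vecMulVec δ δ)
    (μ : ℝ) (hμpos : 0 < μ)
    (v : Fin n → ℝ) (hv : v ≠ 0) (hvev : NM.mulVec v = μ • v)
    (S : Finset (Fin n)) (hS : S = univ.filter (fun i => 0 ≤ v i))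
    (cosθ : ℝ)
    (hcos : cosθ = (∑ i, Real.sqrt (d i) * |v i|) /
      (Real.sqrt (∑ i, v i ^ 2) * Real.sqrt (∑ i, d i)))
    (Q : Finset (Fin n) → ℝ)
    (hQ : ∀ T, Q T = (∑ i ∈ T, ∑ j ∈ T, A i j) - (∑ i ∈ T, d i) ^ 2 / vol)
    (hμ : 4 * ((∑ i ∈ S, d i) * (∑ i ∈ Sᶜ, d i) / vol ^ 2) * (1 / cosθ ^ 2) < μ + 1) :
    0 < Q S := by
  subst hA hd hvol hδ hS hcos
  obtain rfl : NM = normalizedModularity (G.adjMatrix ℝ) := hNM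
  have := SimpleGraph.nontrivial_of_normalizedModularity_mulVec_eq_smul hμpos.ne' hv hvev
  have hdeg := hconn.sum_adjMatrix_pos
  set S := univ.filter fun i => 0 ≤ v i
  have key := le_dotProduct_normalizedModularity_mulVec G.isSymm_adjMatrix hdeg hμpos.ne' hvev
    SimpleGraph.adjMatrix_nonneg (signedSqrtDegree (G.adjMatrix ℝ) S)
  have hcompl := Finset.sum_add_sum_compl S fun i => ∑ j, G.adjMatrix ℝ i j
  have hvv : v ⬝ᵥ v = ∑ i, v i ^ 2 := by simp [dotProduct, sq]
  rw [signedSqrtDegree_dotProduct_normalizedModularity_mulVec G.isSymm_adjMatrix hdeg,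
    signedSqrtDegree_dotProduct_self (fun i => (hdeg i).le),
    sqrtDegree_dotProduct_signedSqrtDegree (fun i => (hdeg i).le),
    signedSqrtDegree_dotProduct_of_nonneg, ← show Q S = modularity _ S from hQ S, hvv,
    ← hcompl] at key
  beta_reduce at hμ
  rw [← hcompl] at hμ
  exact pos_of_cosine_condition (sum_sqrtDegree_mul_abs_pos hdeg hv)
    (hvv ▸ dotProduct_self_pos_of_ne_zero hv) (hcompl ▸ sum_degree_pos hdeg) key hμ

/-- Let `v` be a real eigenvector of the normalized modularity matrix
`𝓜` for a positive eigenvalue `μ`, `S = {i : v_i ≥ 0}`, and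
`cos θ = (Σ_i √d_i |v_i|)/(‖v‖₂‖δ‖₂)`. If
`μ + 1 > 4·(vol S · vol S̄/(vol V)²)·(1/cos²θ)`, then `Q(S) > 0`. -/
theorem nodal_domain_positive_modularity_cosine_condition
    {n : ℕ} (hn : 0 < n) (G : SimpleGraph (Fin n)) [DecidableRel G.Adj]
    (hconn : G.Connected)
    (A : Matrix (Fin n) (Fin n) ℝ) (hA : A = G.adjMatrix ℝ)
    (d : Fin n → ℝ) (hd : d = fun i => ∑ j, A i j)
    (vol : ℝ) (hvol : vol = ∑ i, d i)
    (δ : Fin n → ℝ) (hδ : δ = fun i => Real.sqrt (d i))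
    (NM : Matrix (Fin n) (Fin n) ℝ)
    (hNM : NM = diagonal (fun i => (Real.sqrt (d i))⁻¹) * A *
                diagonal (fun i => (Real.sqrt (d i))⁻¹) - (1 / vol) • vecMulVec δ δ)
    (μ : ℝ) (hμpos : 0 < μ)
    (v : Fin n → ℝ) (hv : v ≠ 0) (hvev : NM.mulVec v = μ • v)
    (S : Finset (Fin n)) (hS : S = univ.filter (fun i => 0 ≤ v i))
    (cosθ : ℝ)
    (hcos : cosθ = (∑ i, Real.sqrt (d i) * |v i|) /
      (Real.sqrt (∑ i, v i ^ 2) * Real.sqrt (∑ i, d i)))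
    (Q : Finset (Fin n) → ℝ)
    (hQ : ∀ T, Q T = (∑ i ∈ T, ∑ j ∈ T, A i j) - (∑ i ∈ T, d i) ^ 2 / vol)
    (hμ : 4 * ((∑ i ∈ S, d i) * (∑ i ∈ Sᶜ, d i) / vol ^ 2) * (1 / cosθ ^ 2) < μ + 1) :
    0 < Q S :=
  nodal_domain_positive_modularity_cosine_condition_general G hconn A hA d hd vol hvol δ hδ NM hNM μ
    hμpos v hv hvev S hS cosθ hcos Q hQ hμ
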